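/- arXiv:1605.05123 — 5 statements merged into one kernel-verified Lean document; each statement's English description precedes it below -/
import Mathlib

section
/- Let G be a simple graph on a vertex type V, and let c, v be distinct vertices of G that are not adjacent in G. Then in the graph G+(c,v), the infimum (in ℕ∞) of the lengths of cycles containing the edge {c,v} equals dist_G(c,v) + 1; in particular it is ∞ exactly when c and v lie in different connected components of G. -/
/-!
For an edge `xy` of a graph `H`, a cycle through `xy` is that edge followed by an `x`–`y` walk
in `H - xy`, so it has length at least `dist_{H - xy}(x, y) + 1`; conversely a shortest
`x`–`y` path in `H - xy` closes up with `xy` into a cycle of exactly that length. For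
`H = G + (c, v)` with `c, v` non-adjacent in `G`, the graph `H - cv` is `G` itself.
-/

open SimpleGraph

variable {V : Type*}

/-- `G + (c,v)`: the graph obtained from `G` by adding the edge `{c, v}`. -/
def addEdge (G : SimpleGraph V) (c v : V) : SimpleGraph V :=
  G ⊔ SimpleGraph.fromEdgeSet {s(c, v)}

/-- The local girth of a vertex `v`: the infimum (in `ℕ∞`) of the lengths of
cycles of `G` passing through `v`. -/
noncomputable def localGirth (G : SimpleGraph V) (v : V) : ℕ∞ :=
  ⨅ (a : V) (w : G.Walk a a) (_ : w.IsCycle) (_ : v ∈ w.support), (w.length : ℕ∞)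

/-- The edge local girth of `e`: the infimum (in `ℕ∞`) of the lengths of
cycles of `G` containing the edge `e`. -/
noncomputable def edgeLocalGirth (G : SimpleGraph V) (e : Sym2 V) : ℕ∞ :=
  ⨅ (a : V) (w : G.Walk a a) (_ : w.IsCycle) (_ : e ∈ w.edges), (w.length : ℕ∞)

/-- A length-`r` valid sequence for `v` in `G`: pairwise distinct vertices,
each distinct from `v` and not adjacent to `v` in `G`. -/
def ValidSeq (G : SimpleGraph V) (v : V) {r : ℕ} (s : Fin r → V) : Prop :=
  Function.Injective s ∧ ∀ i, s i ≠ v ∧ ¬ G.Adj (s i) v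

/-- The graph sequence of a sequence `s`: `graphSeq G v s 0 = G₁ = G` and
`graphSeq G v s i = G_{i+1} = G_i + (s_i, v)`. -/
def graphSeq (G : SimpleGraph V) (v : V) {r : ℕ} (s : Fin r → V) : ℕ → SimpleGraph V
  | 0 => G
  | i + 1 => if h : i < r then addEdge (graphSeq G v s i) (s ⟨i, h⟩) v else graphSeq G v s i

/-- The `r`-edge local girth of `v` in `G`: the supremum, over all length-`r`
valid sequences `s` for `v`, of the local girth of `v` in the final graph. -/
noncomputable def multiEdgeLocalGirth (G : SimpleGraph V) (v : V) (r : ℕ) : ℕ∞ :=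
  ⨆ (s : Fin r → V) (_ : ValidSeq G v s), localGirth (graphSeq G v s r) v

/-- The `r`-edge local girth of `c` with respect to `v`:
`g_v(G+(c,v))` if `r = 1`, and `g_v^{(r-1)}(G+(c,v))` if `r ≥ 2`. -/
noncomputable def cnMultiEdgeLocalGirth (G : SimpleGraph V) (c v : V) (r : ℕ) : ℕ∞ :=
  if r = 1 then localGirth (addEdge G c v) v
  else multiEdgeLocalGirth (addEdge G c v) v (r - 1)

namespace SimpleGraph.Walk.IsCycle

variable {G : SimpleGraph V} {x y : V}

lemma exists_isCycle_snd_eq_length_eq {p : G.Walk x x} (hp : p.IsCycle)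
    (hadj : p.toSubgraph.Adj x y) :
    ∃ q : G.Walk x x, q.IsCycle ∧ q.snd = y ∧ q.length = p.length := by
  have hy : y ∈ p.toSubgraph.neighborSet x := hadj
  rw [hp.neighborSet_toSubgraph_endpoint] at hy
  rcases hy with hy | hy
  · exact ⟨p, hp, hy.symm, rfl⟩
  · refine ⟨p.reverse, hp.reverse, ?_, p.length_reverse⟩
    rw [snd_reverse, hy]

lemma exists_walk_deleteEdges_length_add_one {u : V} {p : G.Walk u u} (hp : p.IsCycle)
    (he : s(x, y) ∈ p.edges) :
    ∃ q : (G.deleteEdges {s(x, y)}).Walk x y, q.length + 1 = p.length := by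
  classical
  have hx : x ∈ p.support := p.fst_mem_support_of_mem_edges he
  have hadj : (p.rotate x hx).toSubgraph.Adj x y := by
    rw [← Subgraph.mem_edgeSet, mem_edges_toSubgraph, (p.rotate_edges x hx).mem_iff]
    exact he
  obtain ⟨q, hq, rfl, hlen⟩ := (hp.rotate hx).exists_isCycle_snd_eq_length_eq hadj
  have hnodup := hq.edges_nodup
  rw [← q.cons_tail_eq hq.not_nil, edges_cons, List.nodup_cons] at hnodup
  have htail : s(x, q.snd) ∉ q.tail.reverse.edges := by
    rw [edges_reverse, List.mem_reverse]
    exact hnodup.1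
  refine ⟨q.tail.reverse.toDeleteEdge _ htail, ?_⟩
  rw [length_transfer, length_reverse, length_tail_add_one hq.not_nil, hlen, length_rotate]

end SimpleGraph.Walk.IsCycle

section edgeLocalGirth

variable {H : SimpleGraph V} {x y : V}

lemma edist_deleteEdges_add_one_le_edgeLocalGirth :
    (H.deleteEdges {s(x, y)}).edist x y + 1 ≤ edgeLocalGirth H s(x, y) := by
  refine le_iInf fun _ => le_iInf fun p => le_iInf fun hp => le_iInf fun he => ?_
  obtain ⟨q, hq⟩ := hp.exists_walk_deleteEdges_length_add_one he
  rw [← hq, Nat.cast_add, Nat.cast_one]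
  gcongr
  exact q.edist_le

lemma edgeLocalGirth_le_length_add_one (h : H.Adj x y) (p : (H.deleteEdges {s(x, y)}).Walk x y) :
    edgeLocalGirth H s(x, y) ≤ p.length + 1 := by
  classical
  let q := p.bypass.mapLe (H.deleteEdges_le _)
  have hq : s(y, x) ∉ q.edges := by
    rw [Walk.edges_mapLe_eq_edges]
    intro he
    simpa [Sym2.eq_swap] using p.bypass.edges_subset_edgeSet he
  have hcycle : (Walk.cons h.symm q).IsCycle :=
    Path.cons_isCycle ⟨q, p.bypass_isPath.mapLe _⟩ h.symm hq
  calc edgeLocalGirth H s(x, y)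
      ≤ (Walk.cons h.symm q).length :=
        iInf_le_of_le y <| iInf_le_of_le _ <| iInf_le_of_le hcycle <| iInf_le _ (by simp)
    _ ≤ p.length + 1 := by
        rw [Walk.length_cons, Walk.length_mapLe, Nat.cast_add, Nat.cast_one]
        gcongr
        exact p.length_bypass_le_length

lemma edgeLocalGirth_eq_edist_deleteEdges_add_one (h : H.Adj x y) :
    edgeLocalGirth H s(x, y) = (H.deleteEdges {s(x, y)}).edist x y + 1 := by
  refine le_antisymm ?_ edist_deleteEdges_add_one_le_edgeLocalGirth
  by_cases hr : (H.deleteEdges {s(x, y)}).Reachable x y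
  · obtain ⟨p, hp⟩ := hr.exists_walk_length_eq_edist
    exact hp ▸ edgeLocalGirth_le_length_add_one h p
  · simp [edist_eq_top_of_not_reachable hr]

end edgeLocalGirth

section addEdge

variable {G : SimpleGraph V} {c v : V}

lemma addEdge_adj_self (hne : c ≠ v) : (addEdge G c v).Adj c v :=
  Or.inr ⟨rfl, hne⟩

lemma deleteEdges_addEdge (hadj : ¬ G.Adj c v) :
    (addEdge G c v).deleteEdges {s(c, v)} = G := by
  ext x y
  simp only [addEdge, deleteEdges_adj, sup_adj, fromEdgeSet_adj, Set.mem_singleton_iff]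
  constructor
  · rintro ⟨h | ⟨h, -⟩, hxy⟩
    · exact h
    · exact absurd h hxy
  · intro h
    refine ⟨Or.inl h, fun hxy => hadj ?_⟩
    rcases Sym2.eq_iff.mp hxy with ⟨rfl, rfl⟩ | ⟨rfl, rfl⟩
    exacts [h, h.symm]

end addEdge

/-- For distinct non-adjacent vertices `c, v` of `G`, in `G+(c,v)` the
infimum of the lengths of cycles containing the edge `{c,v}` equals `dist_G(c,v) + 1`;
in particular it is `∞` exactly when `c` and `v` are in different connected components. -/
theorem stmt_0 (G : SimpleGraph V) (c v : V) (hne : c ≠ v) (hadj : ¬ G.Adj c v) :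
    edgeLocalGirth (addEdge G c v) s(c, v) = G.edist c v + 1 ∧
    (edgeLocalGirth (addEdge G c v) s(c, v) = ⊤ ↔ ¬ G.Reachable c v) := by
  have hgirth : edgeLocalGirth (addEdge G c v) s(c, v) = G.edist c v + 1 := by
    rw [edgeLocalGirth_eq_edist_deleteEdges_add_one (addEdge_adj_self hne),
      deleteEdges_addEdge hadj]
  refine ⟨hgirth, ?_⟩
  rw [hgirth, ENat.add_eq_top, or_iff_left ENat.one_ne_top, ← edist_ne_top_iff_reachable, not_not]
end

section
/- Let G be a simple graph and let c, v be distinct vertices of G that are not adjacent in G. Then the local girth of v in G+(c,v) satisfies g_v(G+(c,v)) = min( g_v(G), dist_G(c,v) + 1 ) in ℕ∞. -/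
open SimpleGraph

variable {V : Type*}

/-! A cycle through `v` in `G+(c,v)` either avoids the new edge, and then lies in `G`, or uses it,
and then deleting that edge leaves a walk from `c` to `v` in `G` one edge shorter. Conversely, a
shortest `c`–`v` path in `G` closes up with the new edge to a cycle through `v` of length
`dist_G(c,v) + 1`. -/

namespace SimpleGraph

variable {G H : SimpleGraph V} {a b c u v x : V}

lemma le_localGirth_iff {n : ℕ∞} :
    n ≤ localGirth G v ↔ ∀ a (w : G.Walk a a), w.IsCycle → v ∈ w.support → n ≤ w.length := by
  simp only [localGirth, le_iInf_iff]

lemma localGirth_le_length {w : G.Walk a a} (hw : w.IsCycle) (hv : v ∈ w.support) :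
    localGirth G v ≤ w.length :=
  le_localGirth_iff.1 le_rfl a w hw hv

lemma localGirth_anti (h : G ≤ H) : localGirth H v ≤ localGirth G v :=
  le_localGirth_iff.2 fun _ w hw hv => by
    simpa using localGirth_le_length (hw.mapLe h) (by rwa [Walk.support_mapLe_eq_support])

lemma Walk.IsCycle.snd_eq_or_penultimate_eq {p : G.Walk u u} (hp : p.IsCycle)
    (he : s(x, u) ∈ p.edges) : x = p.snd ∨ x = p.penultimate := by
  have hx : x ∈ p.toSubgraph.neighborSet u := by
    rwa [Subgraph.mem_neighborSet, ← Subgraph.mem_edgeSet, Walk.mem_edges_toSubgraph, Sym2.eq_swap]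
  simpa [hp.neighborSet_toSubgraph_endpoint] using hx

lemma Walk.IsCycle.exists_walk_of_mem_edges {p : G.Walk u u} (hp : p.IsCycle)
    (he : s(x, u) ∈ p.edges) :
    ∃ q : G.Walk x u, s(u, x) ∉ q.edges ∧ q.length + 1 = p.length := by
  suffices key : ∀ p' : G.Walk u u, p'.IsCycle → p'.snd = x →
      ∃ q : G.Walk x u, s(u, x) ∉ q.edges ∧ q.length + 1 = p'.length by
    rcases hp.snd_eq_or_penultimate_eq he with hx | hx
    · exact key p hp hx.symm
    · simpa using key p.reverse hp.reverse (by rw [Walk.snd_reverse, hx])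
  rintro (_ | ⟨h, q⟩) hc hx
  · exact absurd hc Walk.not_isCycle_nil
  · rw [Walk.snd_cons] at hx
    subst hx
    exact ⟨q, ((Walk.cons_isCycle_iff q h).1 hc).2, rfl⟩

lemma le_addEdge (G : SimpleGraph V) (c v : V) : G ≤ addEdge G c v := le_sup_left

lemma addEdge_adj_of_ne (hne : c ≠ v) :
    (addEdge G c v).Adj v c :=
  Or.inr ⟨Sym2.eq_swap, hne.symm⟩

lemma Walk.mem_edgeSet_of_mem_edges_addEdge {p : (addEdge G c v).Walk a b}
    (hp : s(c, v) ∉ p.edges) {e : Sym2 V} (he : e ∈ p.edges) : e ∈ G.edgeSet := by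
  have h := p.edges_subset_edgeSet he
  simp only [addEdge, edgeSet_sup, edgeSet_fromEdgeSet, Set.mem_union, Set.mem_sdiff,
    Set.mem_singleton_iff] at h
  rcases h with h | ⟨rfl, -⟩
  · exact h
  · exact absurd he hp

lemma localGirth_addEdge_le_edist_add_one (hne : c ≠ v) (hadj : ¬ G.Adj c v) :
    localGirth (addEdge G c v) v ≤ G.edist c v + 1 := by
  classical
  by_cases hr : G.Reachable c v
  · obtain ⟨p, hp⟩ := hr.exists_walk_length_eq_edist
    have hcyc :
        (Walk.cons (addEdge_adj_of_ne hne) (p.bypass.mapLe (le_addEdge G c v))).IsCycle := by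
      refine (Walk.cons_isCycle_iff _ _).2 ⟨p.bypass_isPath.mapLe _, fun he => hadj ?_⟩
      rw [Walk.edges_mapLe_eq_edges] at he
      exact p.bypass.adj_of_mem_edges he |>.symm
    calc localGirth (addEdge G c v) v ≤ p.bypass.length + 1 := by
          simpa using localGirth_le_length hcyc (Walk.start_mem_support _)
      _ ≤ G.edist c v + 1 := by
          rw [← hp]; gcongr; exact_mod_cast p.length_bypass_le_length
  · simp [edist_eq_top_of_not_reachable hr]

lemma min_localGirth_edist_le_localGirth_addEdge (G : SimpleGraph V) (c v : V) :
    min (localGirth G v) (G.edist c v + 1) ≤ localGirth (addEdge G c v) v := by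
  classical
  refine le_localGirth_iff.2 fun a w hw hv => ?_
  by_cases he : s(c, v) ∈ w.edges
  · obtain ⟨q, hq, hlen⟩ := (hw.rotate hv).exists_walk_of_mem_edges
      ((w.rotate_edges v hv).mem_iff.2 he)
    have hqG : s(c, v) ∉ q.edges := by rwa [Sym2.eq_swap]
    calc min (localGirth G v) (G.edist c v + 1) ≤ G.edist c v + 1 := min_le_right _ _
      _ ≤ (q.transfer G fun _ => q.mem_edgeSet_of_mem_edges_addEdge hqG).length + 1 := by
          gcongr; exact edist_le _
      _ = w.length := by rw [Walk.length_rotate] at hlen; simp [← hlen]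
  · calc min (localGirth G v) (G.edist c v + 1) ≤ localGirth G v := min_le_left _ _
      _ ≤ (w.transfer G fun _ => w.mem_edgeSet_of_mem_edges_addEdge he).length :=
          localGirth_le_length (hw.transfer _) (by rwa [Walk.support_transfer])
      _ = w.length := by simp

end SimpleGraph

/-- For distinct non-adjacent vertices `c, v` of `G`,
`g_v(G+(c,v)) = min(g_v(G), dist_G(c,v) + 1)` in `ℕ∞`. -/
theorem stmt_1 (G : SimpleGraph V) (c v : V) (hne : c ≠ v) (hadj : ¬ G.Adj c v) :
    localGirth (addEdge G c v) v = min (localGirth G v) (G.edist c v + 1) :=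
  le_antisymm
    (le_min (localGirth_anti (le_addEdge G c v)) (localGirth_addEdge_le_edist_add_one hne hadj))
    (min_localGirth_edist_le_localGirth_addEdge G c v)
end

section
/- Let G be a simple graph, v a vertex, c a vertex with c ≠ v and ¬G.Adj c v, and x any vertex. Then dist_{G+(c,v)}(x, v) = min( dist_G(x, v), dist_G(x, c) + 1 ) in ℕ∞. -/
open SimpleGraph

variable {V : Type*}

/-! The upper bound is the triangle inequality through the new edge. For the lower bound,
`y ↦ min (d_G(y, v)) (d_G(y, c) + 1)` vanishes at `v` and grows by at most one along every edge
of `G + (c, v)`, and any such potential is bounded by the distance to `v`. -/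

section

variable {G H : SimpleGraph V} {a b c u v x : V}

lemma SimpleGraph.Adj.edist_le_edist_add_one (h : G.Adj a b) (u : V) :
    G.edist a u ≤ G.edist b u + 1 :=
  calc G.edist a u ≤ G.edist a b + G.edist b u := G.edist_triangle
    _ = G.edist b u + 1 := by rw [edist_eq_one_iff_adj.mpr h, add_comm]

lemma SimpleGraph.le_edist_of_forall_adj_le_add_one {f : V → ℕ∞} (hu : f u = 0)
    (hf : ∀ a b, H.Adj a b → f a ≤ f b + 1) (x : V) : f x ≤ H.edist x u := by
  have along_walk : ∀ {y z : V} (w : H.Walk y z), f y ≤ f z + w.length := by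
    intro y z w
    induction w with
    | nil => simp
    | @cons a b z hab w ih =>
      calc f a ≤ f b + 1 := hf a b hab
        _ ≤ f z + w.length + 1 := by gcongr
        _ = f z + (w.cons hab).length := by push_cast [Walk.length_cons]; ring
  rw [edist_eq_sInf]
  refine le_sInf ?_
  rintro _ ⟨w, rfl⟩
  simpa [hu] using along_walk w

lemma le_addEdge : G ≤ addEdge G c v := le_sup_left

lemma addEdge_adj : (addEdge G c v).Adj a b ↔ G.Adj a b ∨ s(a, b) = s(c, v) ∧ a ≠ b := by
  simp [addEdge]

lemma edist_addEdge_le_one : (addEdge G c v).edist c v ≤ 1 := by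
  rw [edist_le_one_iff_adj_or_eq]
  obtain rfl | hne := eq_or_ne c v
  · exact Or.inr rfl
  · exact Or.inl (addEdge_adj.mpr (Or.inr ⟨rfl, hne⟩))

lemma edist_addEdge_le_min :
    (addEdge G c v).edist x v ≤ min (G.edist x v) (G.edist x c + 1) := by
  refine le_min (edist_anti le_addEdge) ?_
  calc (addEdge G c v).edist x v
      ≤ (addEdge G c v).edist x c + (addEdge G c v).edist c v := SimpleGraph.edist_triangle
    _ ≤ G.edist x c + 1 := add_le_add (edist_anti le_addEdge) edist_addEdge_le_one

lemma min_le_edist_addEdge :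
    min (G.edist x v) (G.edist x c + 1) ≤ (addEdge G c v).edist x v := by
  refine le_edist_of_forall_adj_le_add_one (f := fun y ↦ min (G.edist y v) (G.edist y c + 1))
    (by simp) (fun a b hab ↦ ?_) x
  rcases addEdge_adj.mp hab with hab | ⟨hab, -⟩
  · rw [← min_add_add_right]
    exact min_le_min (hab.edist_le_edist_add_one v) (by gcongr; exact hab.edist_le_edist_add_one c)
  · obtain ⟨rfl, rfl⟩ | ⟨rfl, rfl⟩ := Sym2.eq_iff.mp hab <;> simp

end

theorem stmt_2_general (G : SimpleGraph V) (v c : V) (x : V) :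
    (addEdge G c v).edist x v = min (G.edist x v) (G.edist x c + 1) :=
  le_antisymm edist_addEdge_le_min min_le_edist_addEdge

/-- For `c ≠ v` non-adjacent in `G` and any vertex `x`,
`dist_{G+(c,v)}(x, v) = min(dist_G(x, v), dist_G(x, c) + 1)` in `ℕ∞`. -/
theorem stmt_2 (G : SimpleGraph V) (v c : V) (hne : c ≠ v) (hadj : ¬ G.Adj c v) (x : V) :
    (addEdge G c v).edist x v = min (G.edist x v) (G.edist x c + 1) :=
  stmt_2_general G v c x
end

section
/- Let G be a simple graph and v a vertex that has no incident edges in G, and let s_1, s_2 be two distinct vertices, both distinct from v. Then in the graph (G+(s_1,v))+(s_2,v), the infimum of the lengths of cycles passing through v equals dist_G(s_1, s_2) + 2 in ℕ∞. -/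
/-!
Since `v` is isolated in `G`, its only neighbours in `(G+(s₁,v))+(s₂,v)` are `s₁` and `s₂`, and
every other edge is an edge of `G`. Hence a cycle through `v` is `v, s₁, …, s₂, v` (up to
orientation) with a middle `s₁`–`s₂` path of `G`, so it has length at least `dist_G(s₁, s₂) + 2`.
Conversely a shortest `s₁`–`s₂` path of `G` cannot pass through the isolated vertex `v`, and
closing it up through `v` gives a cycle of length exactly `dist_G(s₁, s₂) + 2`.
-/

open SimpleGraph

variable {V : Type*}

namespace SimpleGraph

variable {G H : SimpleGraph V} {u v x y : V}

lemma localGirth_eq_iInf_isCycle (G : SimpleGraph V) (v : V) :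
    localGirth G v = ⨅ (c : G.Walk v v) (_ : c.IsCycle), (c.length : ℕ∞) := by
  classical
  apply le_antisymm
  · refine le_iInf₂ fun c hc => ?_
    exact iInf_le_of_le v <| iInf_le_of_le c <| iInf_le_of_le hc <|
      iInf_le _ c.start_mem_support
  · refine le_iInf fun a => le_iInf₂ fun c hc => le_iInf fun hv => ?_
    exact (iInf₂_le (c.rotate v hv) (hc.rotate hv)).trans_eq (by rw [Walk.length_rotate])

namespace Walk

lemma IsCycle.exists_eq_cons_concat {c : G.Walk v v} (hc : c.IsCycle) :
    ∃ (x y : V) (hx : G.Adj v x) (hy : G.Adj y v) (q : G.Walk x y),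
      c = cons hx (q.concat hy) ∧ q.IsPath ∧ v ∉ q.support ∧ x ≠ y := by
  cases c with
  | nil => exact absurd rfl hc.ne_nil
  | cons hx p =>
    cases p with
    | nil => exact absurd rfl hx.ne
    | cons h p =>
      obtain ⟨y, q, hy, hpq⟩ := exists_cons_eq_concat h p
      rw [hpq, cons_isCycle_iff, concat_isPath_iff] at hc
      obtain ⟨⟨hq, hvq⟩, hedge⟩ := hc
      refine ⟨_, y, hx, hy, q, hpq ▸ rfl, hq, hvq, ?_⟩
      rintro rfl
      obtain rfl := (isPath_iff_nil.mp hq).eq_nil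
      simp [Sym2.eq_swap] at hedge

lemma IsPath.cons_concat_isCycle {p : G.Walk x y} (hp : p.IsPath) (hx : G.Adj v x)
    (hy : G.Adj y v) (hv : v ∉ p.support) (hxy : x ≠ y) :
    (cons hx (p.concat hy)).IsCycle := by
  refine (cons_isCycle_iff _ hx).mpr ⟨hp.concat hv hy, fun he => ?_⟩
  rw [edges_concat, List.concat_eq_append, List.mem_append, List.mem_singleton,
    Sym2.eq_iff] at he
  rcases he with he | ⟨rfl, -⟩ | ⟨-, rfl⟩
  · exact hv (p.fst_mem_support_of_mem_edges he)
  · exact hv p.end_mem_support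
  · exact hxy rfl

lemma notMem_support_of_forall_not_adj (hv : ∀ w, ¬ G.Adj v w) (p : G.Walk u x) (hu : u ≠ v) :
    v ∉ p.support := by
  induction p with
  | nil => simpa using hu.symm
  | cons h p ih =>
    rw [support_cons, List.mem_cons, not_or]
    exact ⟨hu.symm, ih fun hv' => hv _ (hv' ▸ h.symm)⟩

lemma edist_le_length_of_notMem_support (hHG : ∀ a b, H.Adj a b → a ≠ v → b ≠ v → G.Adj a b)
    (q : H.Walk x y) (hq : v ∉ q.support) : G.edist x y ≤ q.length := by
  induction q with
  | nil => simp
  | @cons a b c h q ih =>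
    rw [support_cons, List.mem_cons, not_or] at hq
    have hab : G.Adj a b := hHG a b h (Ne.symm hq.1) fun hb => hq.2 (hb ▸ q.start_mem_support)
    calc G.edist a c ≤ G.edist a b + G.edist b c := SimpleGraph.edist_triangle
      _ ≤ 1 + q.length := add_le_add (edist_eq_one_iff_adj.mpr hab).le (ih hq.2)
      _ = (cons h q).length := by rw [length_cons]; push_cast; ring

end Walk

lemma addEdge_adj {c w a b : V} :
    (addEdge G c w).Adj a b ↔ G.Adj a b ∨ (a ≠ b ∧ (a = c ∧ b = w ∨ a = w ∧ b = c)) := by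
  simp [addEdge, and_comm]

section TwoNewNeighbours

variable {s₁ s₂ : V}

lemma addEdge_addEdge_adj_of_ne {a b : V} (h : (addEdge (addEdge G s₁ v) s₂ v).Adj a b)
    (ha : a ≠ v) (hb : b ≠ v) : G.Adj a b := by
  simp only [addEdge_adj] at h
  tauto

lemma addEdge_addEdge_adj_iff (hv : ∀ w, ¬ G.Adj v w) (h1v : s₁ ≠ v) (h2v : s₂ ≠ v) {w : V} :
    (addEdge (addEdge G s₁ v) s₂ v).Adj v w ↔ w = s₁ ∨ w = s₂ := by
  simp only [addEdge_adj]
  have := hv w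
  constructor
  · tauto
  · rintro (rfl | rfl) <;> simp_all [Ne.symm]

end TwoNewNeighbours

end SimpleGraph

/-- If `v` has no incident edges in `G` and `s₁ ≠ s₂` are both distinct from
`v`, then in `(G+(s₁,v))+(s₂,v)` the infimum of the lengths of cycles passing through `v`
equals `dist_G(s₁, s₂) + 2` in `ℕ∞`. -/
theorem stmt_5 (G : SimpleGraph V) (v : V) (hv : ∀ w : V, ¬ G.Adj v w)
    (s₁ s₂ : V) (h12 : s₁ ≠ s₂) (h1v : s₁ ≠ v) (h2v : s₂ ≠ v) :
    localGirth (addEdge (addEdge G s₁ v) s₂ v) v = G.edist s₁ s₂ + 2 := by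
  set H := addEdge (addEdge G s₁ v) s₂ v
  have hadj {w : V} : H.Adj v w ↔ w = s₁ ∨ w = s₂ := addEdge_addEdge_adj_iff hv h1v h2v
  rw [localGirth_eq_iInf_isCycle]
  refine le_antisymm ?_ (le_iInf₂ fun c hc => ?_)
  · by_cases hr : G.Reachable s₁ s₂
    swap
    · simp [edist_eq_top_of_not_reachable hr]
    obtain ⟨p, hp, hlen⟩ := hr.exists_path_of_dist
    have hvp := Walk.notMem_support_of_forall_not_adj hv p h1v
    have hGH : G ≤ H := le_sup_left.trans le_sup_left
    have hc := ((Walk.isPath_mapLe hGH).mpr hp).cons_concat_isCycle (hadj.mpr (.inl rfl))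
      (H.adj_symm (hadj.mpr (.inr rfl))) (by rwa [Walk.support_mapLe_eq_support]) h12
    refine (iInf₂_le _ hc).trans_eq ?_
    simp [hlen, hr.coe_dist_eq_edist, add_assoc, one_add_one_eq_two]
  · obtain ⟨x, y, hx, hy, q, rfl, -, hvq, hxy⟩ := hc.exists_eq_cons_concat
    have hq := Walk.edist_le_length_of_notMem_support
      (fun a b hab ha hb => addEdge_addEdge_adj_of_ne hab ha hb) q hvq
    have hs : G.edist s₁ s₂ = G.edist x y := by
      rcases hadj.mp hx with rfl | rfl <;> rcases hadj.mp (H.adj_symm hy) with rfl | rfl <;>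
        first | exact absurd rfl hxy | rfl | exact edist_comm
    rw [Walk.length_cons, Walk.length_concat, hs]
    push_cast
    exact add_le_add_left hq 2
end

section
/- Let N, J, K be positive integers and let p : Fin J → Fin K → Option (ZMod N). Let G_p be the simple graph on the vertex type (Fin J × ZMod N) ⊕ (Fin K × ZMod N) in which a left vertex (i,a) is adjacent to a right vertex (j,b) if and only if p i j = some (b − a), and there are no other adjacencies. Then for every i : Fin J, j : Fin K, and t : ZMod N with p i j = some t, and every pair of distinct elements a, a' : ZMod N, every cycle of G_p that contains both the edge {(i,a),(j,a+t)} and the edge {(i,a'),(j,a'+t)} has length at least 8. -/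
/-!
Cutting a closed walk at the two edges `{u, v} = {(i,a), (j,a+t)}` and
`{u', v'} = {(i,a'), (j,a'+t)}` leaves two walks, joining either `v` to `u'` and `v'` to `u`,
or `v` to `v'` and `u'` to `u`. The graph is bipartite and every block `(i, j)` is a matching,
so `(i,a)` and `(i,a')` have no common neighbour, neither have `(j,a+t)` and `(j,a'+t)`, and
`(j,a+t)` is not adjacent to `(i,a')`. Walks of the first kind therefore have length at least 3,
walks of the second kind at least 4, and the closed walk has length at least `2 + 3 + 3 = 8`.
-/

open SimpleGraph

/-- The Tanner graph of a quasi-cyclic LDPC code whose parity-check matrix is a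
`J × K` array of `N × N` circulants, each of which is either a circulant permutation
matrix (CPM) or the zero circulant: a left (check-node) vertex `(i, a)` is adjacent to a
right (variable-node) vertex `(j, b)` iff `p i j = some (b - a)`, and there are no other
adjacencies (`p i j = none` means the zero circulant in block `(i, j)`). -/
def cpmGraph {J K N : ℕ} (p : Fin J → Fin K → Option (ZMod N)) :
    SimpleGraph ((Fin J × ZMod N) ⊕ (Fin K × ZMod N)) where
  Adj x y :=
    match x, y with
    | .inl (i, a), .inr (j, b) => p i j = some (b - a)
    | .inr (j, b), .inl (i, a) => p i j = some (b - a)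
    | _, _ => False
  symm := by
    constructor
    intro x y h
    match x, y with
    | .inl (i, a), .inr (j, b) => exact h
    | .inr (j, b), .inl (i, a) => exact h
  loopless := by
    constructor
    intro x h
    match x with
    | .inl (i, a) => exact h
    | .inr (j, b) => exact h

namespace SimpleGraph.Walk

variable {V : Type*} {G : SimpleGraph V} {x y u v u' v' : V}

theorem exists_split_of_mem_edges (w : G.Walk x y) (he : s(u, v) ∈ w.edges) :
    (∃ (q : G.Walk x u) (r : G.Walk v y), q.length + r.length + 1 = w.length) ∨
      ∃ (q : G.Walk x v) (r : G.Walk u y), q.length + r.length + 1 = w.length := by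
  rcases (isSubwalk_toWalk_iff_mem_edges (w.adj_of_mem_edges he)).mpr he with
    ⟨q, r, hw⟩ | ⟨q, r, hw⟩
  · exact .inl ⟨q, r, by simp [hw, length_append]; omega⟩
  · exact .inr ⟨q, r, by simp [hw, length_append]; omega⟩

theorem exists_walk_of_mem_edges_of_closed (w : G.Walk x x) (he : s(u, v) ∈ w.edges) :
    ∃ c : G.Walk v u, c.length + 1 = w.length ∧ w.edges ⊆ s(u, v) :: c.edges := by
  rcases (isSubwalk_toWalk_iff_mem_edges (w.adj_of_mem_edges he)).mpr he with
    ⟨q, r, hw⟩ | ⟨q, r, hw⟩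
  · refine ⟨r.append q, by simp [hw, length_append]; omega, fun e he => ?_⟩
    simp only [hw, edges_append, Adj.toWalk, edges_cons, edges_nil, List.mem_append,
      List.mem_cons, List.not_mem_nil, or_false] at he ⊢
    tauto
  · refine ⟨(r.append q).reverse, by simp [hw, length_append]; omega, fun e he => ?_⟩
    simp only [hw, edges_append, edges_reverse, Adj.toWalk, edges_cons, edges_nil,
      List.mem_append, List.mem_cons, List.not_mem_nil, or_false, List.mem_reverse] at he ⊢
    rw [Sym2.eq_swap] at he
    tauto

theorem exists_walks_of_mem_edges_of_closed (w : G.Walk x x) (he : s(u, v) ∈ w.edges)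
    (he' : s(u', v') ∈ w.edges) (hne : s(u', v') ≠ s(u, v)) :
    (∃ (q : G.Walk v u') (r : G.Walk v' u), q.length + r.length + 2 = w.length) ∨
      ∃ (q : G.Walk v v') (r : G.Walk u' u), q.length + r.length + 2 = w.length := by
  obtain ⟨c, hlen, hedges⟩ := w.exists_walk_of_mem_edges_of_closed he
  have hc : s(u', v') ∈ c.edges := (List.mem_cons.mp (hedges he')).resolve_left hne
  rcases c.exists_split_of_mem_edges hc with ⟨q, r, h⟩ | ⟨q, r, h⟩
  · exact .inl ⟨q, r, by omega⟩
  · exact .inr ⟨q, r, by omega⟩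

theorem three_le_length_of_odd (w : G.Walk x y) (hodd : Odd w.length) (hxy : ¬G.Adj x y) :
    3 ≤ w.length := by
  rcases w with _ | ⟨h, _ | ⟨_, w⟩⟩
  · simp at hodd
  · exact absurd h hxy
  · grind [length_cons]

theorem four_le_length_of_even (w : G.Walk x y) (heven : Even w.length) (hxy : x ≠ y)
    (hcommon : ∀ z, G.Adj x z → ¬G.Adj z y) : 4 ≤ w.length := by
  rcases w with _ | ⟨h, _ | ⟨h', _ | ⟨_, w⟩⟩⟩
  · exact absurd rfl hxy
  · simp at heven
  · exact absurd h' (hcommon _ h)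
  · grind [length_cons]

end SimpleGraph.Walk

namespace cpmGraph

variable {J K N : ℕ} {p : Fin J → Fin K → Option (ZMod N)}

@[simp] theorem not_adj_inl_inl {u v : Fin J × ZMod N} :
    ¬(cpmGraph p).Adj (.inl u) (.inl v) := id

@[simp] theorem not_adj_inr_inr {u v : Fin K × ZMod N} :
    ¬(cpmGraph p).Adj (.inr u) (.inr v) := id

@[simp] theorem adj_inl_inr {i : Fin J} {j : Fin K} {a b : ZMod N} :
    (cpmGraph p).Adj (.inl (i, a)) (.inr (j, b)) ↔ p i j = some (b - a) := .rfl

@[simp] theorem adj_inr_inl {i : Fin J} {j : Fin K} {a b : ZMod N} :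
    (cpmGraph p).Adj (.inr (j, b)) (.inl (i, a)) ↔ p i j = some (b - a) := .rfl

def sideColoring (p : Fin J → Fin K → Option (ZMod N)) : (cpmGraph p).Coloring Bool :=
  Coloring.mk Sum.isLeft fun {x y} h => by
    rcases x with _ | _ <;> rcases y with _ | _ <;> simp_all

@[simp] theorem sideColoring_apply (x) : sideColoring p x = x.isLeft := rfl

theorem eq_of_adj_inl_of_adj_inl {i : Fin J} {a a' : ZMod N} {y}
    (h : (cpmGraph p).Adj (.inl (i, a)) y) (h' : (cpmGraph p).Adj (.inl (i, a')) y) :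
    a = a' := by
  rcases y with _ | ⟨j, b⟩
  · simp at h
  · simpa using (adj_inl_inr.mp h).symm.trans (adj_inl_inr.mp h')

theorem eq_of_adj_inr_of_adj_inr {j : Fin K} {b b' : ZMod N} {y}
    (h : (cpmGraph p).Adj (.inr (j, b)) y) (h' : (cpmGraph p).Adj (.inr (j, b')) y) :
    b = b' := by
  rcases y with ⟨i, a⟩ | _
  · simpa using (adj_inr_inl.mp h).symm.trans (adj_inr_inl.mp h')
  · simp at h

theorem four_le_length_inl {i : Fin J} {a a' : ZMod N}
    (w : (cpmGraph p).Walk (.inl (i, a)) (.inl (i, a'))) (ha : a ≠ a') : 4 ≤ w.length :=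
  w.four_le_length_of_even (((sideColoring p).even_length_iff_congr w).mpr .rfl)
    (by simpa using ha) fun _ h h' => ha (eq_of_adj_inl_of_adj_inl h h'.symm)

theorem four_le_length_inr {j : Fin K} {b b' : ZMod N}
    (w : (cpmGraph p).Walk (.inr (j, b)) (.inr (j, b'))) (hb : b ≠ b') : 4 ≤ w.length :=
  w.four_le_length_of_even (((sideColoring p).even_length_iff_congr w).mpr .rfl)
    (by simpa using hb) fun _ h h' => hb (eq_of_adj_inr_of_adj_inr h h'.symm)

theorem three_le_length_inr_inl {i : Fin J} {j : Fin K} {t a a' : ZMod N}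
    (hp : p i j = some t) (w : (cpmGraph p).Walk (.inr (j, a + t)) (.inl (i, a')))
    (ha : a ≠ a') : 3 ≤ w.length := by
  refine w.three_le_length_of_odd
    (((sideColoring p).odd_length_iff_not_congr w).mpr (by simp)) fun h => ?_
  rw [adj_inr_inl, hp, Option.some_inj] at h
  exact ha (by linear_combination -h)

end cpmGraph

theorem stmt_15_general {J K N : ℕ}
    (p : Fin J → Fin K → Option (ZMod N)) (i : Fin J) (j : Fin K) (t : ZMod N)
    (hp : p i j = some t) (a a' : ZMod N) (haa : a ≠ a')
    (x : (Fin J × ZMod N) ⊕ (Fin K × ZMod N)) (w : (cpmGraph p).Walk x x)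
    (h1 : s(Sum.inl (i, a), Sum.inr (j, a + t)) ∈ w.edges)
    (h2 : s(Sum.inl (i, a'), Sum.inr (j, a' + t)) ∈ w.edges) :
    8 ≤ w.length := by
  have hne : s(Sum.inl (i, a'), Sum.inr (j, a' + t)) ≠ s(Sum.inl (i, a), Sum.inr (j, a + t)) := by
    simp [haa.symm]
  rcases w.exists_walks_of_mem_edges_of_closed h1 h2 hne with ⟨q, r, hlen⟩ | ⟨q, r, hlen⟩
  · have := cpmGraph.three_le_length_inr_inl hp q haa
    have := cpmGraph.three_le_length_inr_inl hp r haa.symm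
    omega
  · have := cpmGraph.four_le_length_inr q (by simpa using haa)
    have := cpmGraph.four_le_length_inl r haa.symm
    omega

/-- For positive `N, J, K` and `p : Fin J → Fin K → Option (ZMod N)`,
if `p i j = some t` and `a ≠ a'`, then every cycle of `cpmGraph p` containing both
edges `{(i,a), (j,a+t)}` and `{(i,a'), (j,a'+t)}` (two distinct edges of the same CPM
block `(i,j)`) has length at least `8`. -/
theorem stmt_15 {J K N : ℕ} (hJ : 0 < J) (hK : 0 < K) (hN : 0 < N)
    (p : Fin J → Fin K → Option (ZMod N)) (i : Fin J) (j : Fin K) (t : ZMod N)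
    (hp : p i j = some t) (a a' : ZMod N) (haa : a ≠ a')
    (x : (Fin J × ZMod N) ⊕ (Fin K × ZMod N)) (w : (cpmGraph p).Walk x x)
    (hw : w.IsCycle)
    (h1 : s(Sum.inl (i, a), Sum.inr (j, a + t)) ∈ w.edges)
    (h2 : s(Sum.inl (i, a'), Sum.inr (j, a' + t)) ∈ w.edges) :
    8 ≤ w.length :=
  stmt_15_general p i j t hp a a' haa x w h1 h2
end
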